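/- arXiv:1507.00487 — 3 statements merged into one kernel-verified Lean document; each statement's English description precedes it below -/
import Mathlib

section
/- Let k ≥ 2 be an integer. The set of complex fixed points of the Dickson polynomial D_k (solutions of D_k(x) = x in ℂ) has exactly k elements, and it equals the union {α(a/(k−1)) : a ∈ ℤ} ∪ {α(a/(k+1)) : a ∈ ℤ}, where α(σ) = 2cos(2πσ). -/
/-!
Writing `x = z + z⁻¹`, one has `D_k(x) = z ^ k + z⁻¹ ^ k`, so `D_k(x) = x` iff
`(z ^ (k - 1) - 1) * (z ^ (k + 1) - 1) = 0`, i.e. `z` is a `(k - 1)`-th or `(k + 1)`-th root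
of unity. The fixed points are the roots of the degree-`k` polynomial `D_k - X`, so there are at
most `k` of them; conversely `α` is injective on `[0, 1/2]`, which contains
`⌊(k + 1)/2⌋ + ⌊k/2⌋ = k` distinct parameters of the form `j/(k - 1)` or `j/(k + 1)`.
-/

/-- Dickson polynomials of the first kind, as functions on ℂ. -/
noncomputable def dickson : ℕ → ℂ → ℂ
  | 0, _ => 2
  | 1, x => x
  | (k+2), x => x * dickson (k+1) x - dickson k x

/-- `α σ = e^{2πiσ} + e^{-2πiσ} = 2cos(2πσ)`. -/
noncomputable def alpha (σ : ℝ) : ℂ :=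
  Complex.exp (2 * Real.pi * Complex.I * σ) + Complex.exp (-(2 * Real.pi * Complex.I * σ))

open Complex Finset

theorem dickson_eq_eval_dickson_one_one :
    ∀ (n : ℕ) (x : ℂ), dickson n x = (Polynomial.dickson 1 1 n).eval x
  | 0, x => by norm_num [dickson]
  | 1, x => by simp [dickson]
  | n + 2, x => by
    simp [dickson, Polynomial.dickson_add_two, dickson_eq_eval_dickson_one_one (n + 1),
      dickson_eq_eval_dickson_one_one n]

theorem dickson_add_inv {z : ℂ} (hz : z ≠ 0) (n : ℕ) :
    dickson n (z + z⁻¹) = z ^ n + z⁻¹ ^ n := by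
  rw [dickson_eq_eval_dickson_one_one,
    Polynomial.dickson_one_one_eval_add_inv _ _ (mul_inv_cancel₀ hz)]

open Polynomial in
theorem natDegree_dickson_one_one (n : ℕ) : (Polynomial.dickson 1 (1 : ℂ) n).natDegree = n := by
  rw [dickson_one_one_eq_chebyshev_T, show (2 : ℂ[X]) = C 2 from rfl, natDegree_C_mul two_ne_zero,
    natDegree_comp, natDegree_C_mul_X _ (by simp), Chebyshev.natDegree_T]
  simp

theorem exists_add_inv_eq (x : ℂ) : ∃ z ≠ 0, z + z⁻¹ = x := by
  obtain ⟨s, hs⟩ := IsAlgClosed.exists_pow_nat_eq (x ^ 2 - 4) two_pos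
  have hmul : (x + s) / 2 * ((x - s) / 2) = 1 := by linear_combination -hs / 4
  refine ⟨_, left_ne_zero_of_mul_eq_one hmul, ?_⟩
  rw [inv_eq_of_mul_eq_one_right hmul]
  ring

theorem dickson_succ_add_inv_eq_iff {z : ℂ} (hz : z ≠ 0) (n : ℕ) :
    dickson (n + 1) (z + z⁻¹) = z + z⁻¹ ↔ z ^ n = 1 ∨ z ^ (n + 2) = 1 := by
  have hfactor : z ^ (n + 1) * (z ^ (n + 1) + z⁻¹ ^ (n + 1) - (z + z⁻¹)) =
      (z ^ n - 1) * (z ^ (n + 2) - 1) := by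
    simp only [inv_pow]
    field_simp
    ring
  rw [dickson_add_inv hz, ← sub_eq_zero, ← mul_right_inj' (pow_ne_zero (n + 1) hz), mul_zero,
    hfactor, mul_eq_zero, sub_eq_zero, sub_eq_zero]

theorem pow_eq_one_iff_exists_int {n : ℕ} (hn : n ≠ 0) {z : ℂ} :
    z ^ n = 1 ↔ ∃ a : ℤ, z = exp (2 * Real.pi * I * (a / n)) := by
  have hn' : (n : ℂ) ≠ 0 := Nat.cast_ne_zero.mpr hn
  constructor
  · intro h
    have hz : z ≠ 0 := by rintro rfl; simp [hn] at h
    have hexp : exp (n * log z) = 1 := by rw [exp_nat_mul, exp_log hz, h]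
    obtain ⟨a, ha⟩ := exp_eq_one_iff.mp hexp
    refine ⟨a, ?_⟩
    rw [← exp_log hz]
    congr 1
    field_simp
    linear_combination ha
  · rintro ⟨a, rfl⟩
    rw [← exp_nat_mul, ← exp_int_mul_two_pi_mul_I a]
    congr 1
    field_simp

theorem exists_alpha_iff {n : ℕ} (hn : n ≠ 0) (x : ℂ) :
    (∃ a : ℤ, x = alpha (a / n)) ↔ ∃ z ≠ 0, z + z⁻¹ = x ∧ z ^ n = 1 := by
  simp_rw [pow_eq_one_iff_exists_int hn]
  constructor
  · rintro ⟨a, rfl⟩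
    refine ⟨_, exp_ne_zero _, ?_, a, rfl⟩
    rw [alpha, exp_neg]
    push_cast
    ring_nf
  · rintro ⟨_, -, rfl, a, rfl⟩
    refine ⟨a, ?_⟩
    rw [alpha, exp_neg]
    push_cast
    ring_nf

theorem dickson_succ_eq_self_iff_exists_add_inv (n : ℕ) (x : ℂ) :
    dickson (n + 1) x = x ↔ ∃ z ≠ 0, z + z⁻¹ = x ∧ (z ^ n = 1 ∨ z ^ (n + 2) = 1) := by
  constructor
  · intro hx
    obtain ⟨z, hz, rfl⟩ := exists_add_inv_eq x
    exact ⟨z, hz, rfl, (dickson_succ_add_inv_eq_iff hz n).mp hx⟩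
  · rintro ⟨z, hz, rfl, hpow⟩
    exact (dickson_succ_add_inv_eq_iff hz n).mpr hpow

theorem dickson_succ_eq_self_iff {n : ℕ} (hn : n ≠ 0) (x : ℂ) :
    dickson (n + 1) x = x ↔
      (∃ a : ℤ, x = alpha (a / n)) ∨ ∃ a : ℤ, x = alpha (a / (n + 2)) := by
  rw [exists_alpha_iff hn, show (n : ℝ) + 2 = (n + 2 : ℕ) by push_cast; rfl,
    exists_alpha_iff (Nat.succ_ne_zero _), dickson_succ_eq_self_iff_exists_add_inv]
  simp only [and_or_left, exists_or]

open Polynomial in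
theorem natDegree_dickson_one_one_sub_X {k : ℕ} (hk : 2 ≤ k) :
    (Polynomial.dickson 1 (1 : ℂ) k - X).natDegree = k := by
  rw [natDegree_sub_eq_left_of_natDegree_lt] <;> simp only [natDegree_dickson_one_one, natDegree_X]
  omega

theorem setOf_dickson_eq_self_eq_rootSet {k : ℕ} (hk : 2 ≤ k) :
    {x : ℂ | dickson k x = x} =
      (Polynomial.dickson 1 (1 : ℂ) k - Polynomial.X).rootSet ℂ := by
  have hne : Polynomial.dickson 1 (1 : ℂ) k - Polynomial.X ≠ 0 :=
    Polynomial.ne_zero_of_natDegree_gt (n := 0)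
      (by rw [natDegree_dickson_one_one_sub_X hk]; omega)
  ext x
  simp [Polynomial.mem_rootSet, hne, dickson_eq_eval_dickson_one_one, sub_eq_zero]

theorem alpha_eq_two_mul_cos (σ : ℝ) :
    alpha σ = ((2 * Real.cos (2 * Real.pi * σ) : ℝ) : ℂ) := by
  rw [alpha, ofReal_mul, ofReal_cos, Complex.cos]
  push_cast
  ring_nf

theorem alpha_injOn : Set.InjOn alpha (Set.Icc 0 (1 / 2)) := by
  intro σ hσ τ hτ h
  rw [alpha_eq_two_mul_cos, alpha_eq_two_mul_cos, ofReal_inj, mul_right_inj' two_ne_zero] at h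
  have hmaps : ∀ t ∈ Set.Icc (0 : ℝ) (1 / 2), 2 * Real.pi * t ∈ Set.Icc 0 Real.pi :=
    fun t ht => ⟨by nlinarith [ht.1, Real.pi_pos], by nlinarith [ht.2, Real.pi_pos]⟩
  exact mul_left_cancel₀ (by positivity) (Real.injOn_cos (hmaps σ hσ) (hmaps τ hτ) h)

-- For `k = n + 1`: `j/(k - 1)` with `2j ≤ k - 1`, and `j/(k + 1)` with `1 ≤ j ≤ k/2`.
noncomputable def fixAngles (n : ℕ) : Finset ℝ :=
  (range ((n + 2) / 2)).image (fun j : ℕ => (j : ℝ) / n) ∪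
    (Icc 1 ((n + 1) / 2)).image (fun j : ℕ => (j : ℝ) / (n + 2))

theorem natCast_div_ne_natCast_div_add_two {n i j : ℕ} (hj : 1 ≤ j) (hj' : 2 * j ≤ n + 1) :
    (i : ℝ) / n ≠ j / (n + 2) := by
  intro h
  have hn : (n : ℝ) ≠ 0 := by norm_cast; omega
  rw [div_eq_div_iff hn (by positivity)] at h
  norm_cast at h
  rcases le_or_gt j i with hji | hij
  · nlinarith
  · nlinarith

theorem card_fixAngles {n : ℕ} (hn : n ≠ 0) : (fixAngles n).card = n + 1 := by
  have hn' : (n : ℝ) ≠ 0 := Nat.cast_ne_zero.mpr hn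
  rw [fixAngles, card_union_of_disjoint, card_image_of_injective, card_image_of_injective,
    card_range, Nat.card_Icc]
  · omega
  · intro i j h
    simpa [div_left_inj' (by positivity : (n : ℝ) + 2 ≠ 0)] using h
  · intro i j h
    simpa [div_left_inj' hn'] using h
  · simp only [disjoint_left, mem_image, mem_range, mem_Icc, not_exists, not_and]
    rintro _ ⟨i, -, rfl⟩ j ⟨hj, hj'⟩ h
    exact natCast_div_ne_natCast_div_add_two hj (by omega) h.symm

theorem div_mem_Icc_zero_half {a b : ℝ} (ha : 0 ≤ a) (hab : 2 * a ≤ b) :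
    a / b ∈ Set.Icc 0 (1 / 2) :=
  ⟨div_nonneg ha (by linarith), div_le_of_le_mul₀ (by linarith) (by norm_num) (by linarith)⟩

theorem fixAngles_subset_Icc (n : ℕ) : (fixAngles n : Set ℝ) ⊆ Set.Icc 0 (1 / 2) := by
  simp only [fixAngles, coe_union, coe_image, coe_range, coe_Icc, Set.union_subset_iff,
    Set.image_subset_iff]
  constructor
  · intro j (hj : j < (n + 2) / 2)
    exact div_mem_Icc_zero_half j.cast_nonneg (by exact_mod_cast (by omega : 2 * j ≤ n))
  · rintro j ⟨-, hj⟩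
    exact div_mem_Icc_zero_half j.cast_nonneg (by exact_mod_cast (by omega : 2 * j ≤ n + 2))

theorem dickson_alpha_eq_self_of_mem_fixAngles {n : ℕ} (hn : n ≠ 0) {t : ℝ}
    (ht : t ∈ fixAngles n) :
    dickson (n + 1) (alpha t) = alpha t := by
  rw [dickson_succ_eq_self_iff hn]
  simp only [fixAngles, mem_union, mem_image] at ht
  rcases ht with ⟨j, -, rfl⟩ | ⟨j, -, rfl⟩
  · exact Or.inl ⟨j, by simp⟩
  · exact Or.inr ⟨j, by simp⟩

theorem le_ncard_setOf_dickson_eq_self {n : ℕ} (hn : n ≠ 0) :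
    n + 1 ≤ {x : ℂ | dickson (n + 1) x = x}.ncard := by
  have hfin : {x : ℂ | dickson (n + 1) x = x}.Finite := by
    rw [setOf_dickson_eq_self_eq_rootSet (by omega)]
    exact Polynomial.rootSet_finite _ _
  have hsub : ((fixAngles n).image alpha : Set ℂ) ⊆ {x : ℂ | dickson (n + 1) x = x} := by
    simpa [Set.subset_def] using fun t ht => dickson_alpha_eq_self_of_mem_fixAngles hn ht
  calc n + 1 = ((fixAngles n).image alpha).card := by
        rw [card_image_of_injOn (alpha_injOn.mono (fixAngles_subset_Icc n)), card_fixAngles hn]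
    _ = ((fixAngles n).image alpha : Set ℂ).ncard := (Set.ncard_coe_finset _).symm
    _ ≤ _ := Set.ncard_le_ncard hsub hfin

theorem fix_dickson (k : ℕ) (hk : 2 ≤ k) :
    {x : ℂ | dickson k x = x} =
      ({x : ℂ | ∃ a : ℤ, x = alpha ((a : ℝ) / ((k : ℝ) - 1))} ∪
        {x : ℂ | ∃ a : ℤ, x = alpha ((a : ℝ) / ((k : ℝ) + 1))}) ∧
    ({x : ℂ | dickson k x = x}).ncard = k := by
  obtain ⟨n, rfl⟩ : ∃ n, k = n + 1 := ⟨k - 1, by omega⟩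
  have hn : n ≠ 0 := by omega
  refine ⟨?_, le_antisymm ?_ (le_ncard_setOf_dickson_eq_self hn)⟩
  · have hsub : ((n + 1 : ℕ) : ℝ) - 1 = n := by push_cast; ring
    have hadd : ((n + 1 : ℕ) : ℝ) + 1 = n + 2 := by push_cast; ring
    ext x
    rw [hsub, hadd]
    exact dickson_succ_eq_self_iff hn x
  · rw [setOf_dickson_eq_self_eq_rootSet hk]
    exact (Polynomial.ncard_rootSet_le _ _).trans_eq (natDegree_dickson_one_one_sub_X hk)
end

section
/- Let k be an integer with |k| ≥ 2 and let r = a/b, s = c/d be rational numbers in lowest terms. If multiplication by k permutes the subset {r, s, −(r+s)} of ℝ/ℤ (equivalently, the point (α(r,s), α(−r,−s)) is periodic under the bivariate Chebyshev map 𝒯_k), then gcd(b,k) = 1 and gcd(d,k) = 1; in particular, since k^6 r ≡ r and k^6 s ≡ s (mod ℤ), b | k^6 − 1 and d | k^6 − 1. -/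
lemma den_dvd_of_zsmul_eq_zero (n : ℤ) (hn : n ≠ 0) (q : ℚ)
    (h : (n : ℤ) • ((q : ℝ) : AddCircle (1:ℝ)) = 0) : (q.den : ℤ) ∣ n := by
  rw [← AddCircle.coe_zsmul, AddCircle.coe_eq_zero_iff] at h
  obtain ⟨z, hz⟩ := h
  have hq : (n : ℚ) * q = (z : ℚ) := by
    have : ((n : ℚ) * q : ℝ) = ((z : ℚ) : ℝ) := by
      push_cast; simp [zsmul_eq_mul] at hz; linarith [hz]
    exact_mod_cast this
  have hqq : q = (z : ℚ) / (n : ℚ) := by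
    rw [eq_div_iff (by exact_mod_cast hn), mul_comm]; exact hq
  have hdvd : ((Rat.divInt z n).den : ℤ) ∣ n := Rat.den_dvd z n
  rw [Rat.divInt_eq_div, ← hqq] at hdvd
  exact hdvd

theorem denominators_coprime_of_periodic (k : ℤ) (hk : 2 ≤ |k|) (r s : ℚ)
    (h : ({(((k : ℝ) * (r : ℝ) : ℝ) : AddCircle (1:ℝ)),
           (((k : ℝ) * (s : ℝ) : ℝ) : AddCircle (1:ℝ)),
           ((-((k : ℝ) * (r : ℝ) + (k : ℝ) * (s : ℝ)) : ℝ) : AddCircle (1:ℝ))} :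
            Set (AddCircle (1:ℝ))) =
         ({((r : ℝ) : AddCircle (1:ℝ)), ((s : ℝ) : AddCircle (1:ℝ)),
           ((-((r : ℝ) + (s : ℝ)) : ℝ) : AddCircle (1:ℝ))} : Set (AddCircle (1:ℝ)))) :
    (r.den : ℤ) ∣ k ^ 6 - 1 ∧ (s.den : ℤ) ∣ k ^ 6 - 1 := by
  set a : AddCircle (1:ℝ) := ((r : ℝ) : AddCircle (1:ℝ)) with ha
  set b : AddCircle (1:ℝ) := ((s : ℝ) : AddCircle (1:ℝ)) with hb
  have eA : (((k : ℝ) * (r : ℝ) : ℝ) : AddCircle (1:ℝ)) = k • a := by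
    rw [ha, ← AddCircle.coe_zsmul, zsmul_eq_mul]
  have eB : (((k : ℝ) * (s : ℝ) : ℝ) : AddCircle (1:ℝ)) = k • b := by
    rw [hb, ← AddCircle.coe_zsmul, zsmul_eq_mul]
  have eC : ((-((k : ℝ) * (r : ℝ) + (k : ℝ) * (s : ℝ)) : ℝ) : AddCircle (1:ℝ))
      = -(k • a + k • b) := by
    rw [← eA, ← eB, QuotientAddGroup.mk_neg, QuotientAddGroup.mk_add]
  have ec : ((-((r : ℝ) + (s : ℝ)) : ℝ) : AddCircle (1:ℝ)) = -(a + b) := by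
    rw [ha, hb, QuotientAddGroup.mk_neg, QuotientAddGroup.mk_add]
  rw [eA, eB, eC, ec] at h
  have hA : k • a = a ∨ k • a = b ∨ k • a = -(a + b) := by
    have : k • a ∈ ({a, b, -(a+b)} : Set (AddCircle (1:ℝ))) := h ▸ Set.mem_insert _ _
    simpa using this
  have hB : k • b = a ∨ k • b = b ∨ k • b = -(a + b) := by
    have : k • b ∈ ({a, b, -(a+b)} : Set (AddCircle (1:ℝ))) :=
      h ▸ Set.mem_insert_of_mem _ (Set.mem_insert _ _)
    simpa using this
  have hma : a = k • a ∨ a = k • b ∨ a = -(k • a + k • b) := by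
    have : a ∈ ({k • a, k • b, -(k • a + k • b)} : Set (AddCircle (1:ℝ))) :=
      h.symm ▸ Set.mem_insert _ _
    simpa [eq_comm] using this
  have hmb : b = k • a ∨ b = k • b ∨ b = -(k • a + k • b) := by
    have : b ∈ ({k • a, k • b, -(k • a + k • b)} : Set (AddCircle (1:ℝ))) :=
      h.symm ▸ Set.mem_insert_of_mem _ (Set.mem_insert _ _)
    simpa [eq_comm] using this
  have lift1 : ∀ x : AddCircle (1:ℝ), k • x = x → (k ^ 6) • x = x := by
    intro x hx
    rw [show (k ^ 6 : ℤ) = k*(k*(k*(k*(k*k)))) by ring]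
    simp only [mul_smul, hx]
  have lift2 : ∀ x : AddCircle (1:ℝ), (k*k) • x = x → (k ^ 6) • x = x := by
    intro x hx
    rw [show (k ^ 6 : ℤ) = (k*k)*((k*k)*(k*k)) by ring]
    simp only [mul_smul] at hx ⊢
    rw [hx, hx, hx]
  have lift3 : ∀ x : AddCircle (1:ℝ), (k*(k*k)) • x = x → (k ^ 6) • x = x := by
    intro x hx
    rw [show (k ^ 6 : ℤ) = (k*(k*k))*(k*(k*k)) by ring]
    simp only [mul_smul] at hx ⊢
    rw [hx, hx]
  have key : (k ^ 6) • a = a ∧ (k ^ 6) • b = b := by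
    rcases hA with h1 | h1 | h1 <;> rcases hB with h2 | h2 | h2
    · -- k•a=a, k•b=a
      rcases hmb with h3 | h3 | h3
      · have hba : b = a := h3.trans h1
        exact ⟨lift1 a h1, lift1 b (h2.trans hba.symm)⟩
      · exact ⟨lift1 a h1, lift1 b h3.symm⟩
      · rw [h1, h2] at h3
        refine ⟨lift1 a h1, lift1 b ?_⟩
        rw [h3, smul_neg, smul_add, h1]
    · -- k•a=a, k•b=b
      exact ⟨lift1 a h1, lift1 b h2⟩
    · -- k•a=a, k•b=-(a+b)
      refine ⟨lift1 a h1, lift2 b ?_⟩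
      rw [mul_smul, h2, smul_neg, smul_add, h1, h2]; abel
    · -- k•a=b, k•b=a
      refine ⟨lift2 a ?_, lift2 b ?_⟩
      · rw [mul_smul, h1, h2]
      · rw [mul_smul, h2, h1]
    · -- k•a=b, k•b=b
      rcases hma with h3 | h3 | h3
      · have hab : a = b := h3.trans h1
        exact ⟨lift1 a (h1.trans hab.symm), lift1 b h2⟩
      · have hab : a = b := h3.trans h2
        exact ⟨lift1 a (h1.trans hab.symm), lift1 b h2⟩
      · rw [h1, h2] at h3
        refine ⟨lift1 a ?_, lift1 b h2⟩
        rw [h3, smul_neg, smul_add, h2]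
    · -- k•a=b, k•b=-(a+b)
      refine ⟨lift3 a ?_, lift3 b ?_⟩
      · rw [mul_smul, mul_smul, h1, h2, smul_neg, smul_add, h1, h2]; abel
      · rw [mul_smul, mul_smul, h2, smul_neg, smul_add, h1, h2,
          show -(b + -(a+b)) = a by abel, h1]
    · -- k•a=-(a+b), k•b=a
      refine ⟨lift3 a ?_, lift3 b ?_⟩
      · rw [mul_smul, mul_smul, h1, smul_neg, smul_add, h1, h2,
          show -(-(a+b) + a) = b by abel, h2]
      · rw [mul_smul, mul_smul, h2, h1, smul_neg, smul_add, h1, h2]; abel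
    · -- k•a=-(a+b), k•b=b
      refine ⟨lift2 a ?_, lift1 b h2⟩
      rw [mul_smul, h1, smul_neg, smul_add, h1, h2]; abel
    · -- k•a=-(a+b), k•b=-(a+b)
      rcases hma with h3 | h3 | h3
      · refine ⟨lift1 a h3.symm, lift2 b ?_⟩
        rw [mul_smul, h2, smul_neg, smul_add, ← h3, h2]; abel
      · have h4 : k • a = a := h1.trans (h3.trans h2).symm
        refine ⟨lift1 a h4, lift2 b ?_⟩
        rw [mul_smul, h2, smul_neg, smul_add, h4, h2]; abel
      · rw [h1, h2] at h3
        have h4 : a = -(b + b) := by linear_combination (norm := module) -h3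
        have h5 : -(a + b) = b := by linear_combination (norm := module) -h4
        have h6 : k • b = b := h2.trans h5
        have h7 : k • a = a := by rw [h4, smul_neg, smul_add, h6]
        exact ⟨lift1 a h7, lift1 b h6⟩
  have hne : k ^ 6 - 1 ≠ 0 := by
    have h64 : (64 : ℤ) ≤ |k ^ 6| := by
      rw [abs_pow]
      calc (64 : ℤ) = 2 ^ 6 := by norm_num
        _ ≤ |k| ^ 6 := pow_le_pow_left₀ (by norm_num) hk 6
    intro h0
    have : k ^ 6 = 1 := by omega
    rw [this] at h64; norm_num at h64
  obtain ⟨ka, kb⟩ := key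
  constructor
  · refine den_dvd_of_zsmul_eq_zero _ hne r ?_
    rw [← ha, sub_smul, one_smul, ka, sub_self]
  · refine den_dvd_of_zsmul_eq_zero _ hne s ?_
    rw [← hb, sub_smul, one_smul, kb, sub_self]
end

section
/- Let q = p^r be a prime power. The bivariate Chebyshev polynomial g_q(x,y) reduces to x^q modulo p; i.e., g_q(x,y) ≡ x^q in 𝔽_p[x,y]. Consequently 𝒯_q(x,y) = (x^q, y^q) as a map on 𝔽̄_p². -/
open MvPolynomial

/-- `chebAuxP n = g_{n-1}(x,y)` in `ℤ[x,y]` (with `x = X 0`, `y = X 1`):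
`g_{-1} = y`, `g_0 = 3`, `g_1 = x`, `g_k = x g_{k-1} - y g_{k-2} + g_{k-3}`. -/
noncomputable def chebAuxP : ℕ → MvPolynomial (Fin 2) ℤ
  | 0 => MvPolynomial.X 1
  | 1 => 3
  | 2 => MvPolynomial.X 0
  | (n+3) => MvPolynomial.X 0 * chebAuxP (n+2) - MvPolynomial.X 1 * chebAuxP (n+1) + chebAuxP n

/-- The bivariate Chebyshev polynomial `g_k ∈ ℤ[x,y]` for `k ≥ 0`. -/
noncomputable def gP (k : ℕ) : MvPolynomial (Fin 2) ℤ := chebAuxP (k+1)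

/-- `chebAux n x y = g_{n-1}(x,y)` as a function on a commutative ring. -/
def chebAux {R : Type*} [CommRing R] : ℕ → R → R → R
  | 0, _, y => y
  | 1, _, _ => 3
  | 2, x, _ => x
  | (n+3), x, y => x * chebAux (n+2) x y - y * chebAux (n+1) x y + chebAux n x y

/-- The bivariate Chebyshev polynomial `g_k` as a function. -/
def g {R : Type*} [CommRing R] (k : ℕ) (x y : R) : R := chebAux (k+1) x y

open Polynomial in
/-- Over an algebraically closed field, every pair `(x, y)` arises as
`(e₁, e₂)` of a triple with `e₃ = 1`. -/
lemma exists_roots_aux {L : Type*} [Field L] [IsAlgClosed L] (x y : L) :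
    ∃ a b c : L, a + b + c = x ∧ a*b + a*c + b*c = y ∧ a*b*c = 1 := by
  have hdeg : (Polynomial.X^3 - Polynomial.C x * Polynomial.X^2 + Polynomial.C y * Polynomial.X - 1 : L[X]).degree = 3 := by compute_degree!
  obtain ⟨a, ha⟩ := IsAlgClosed.exists_root (Polynomial.X^3 - Polynomial.C x * Polynomial.X^2 + Polynomial.C y * Polynomial.X - 1 : L[X])
    (by rw [hdeg]; decide)
  have ha' : a^3 - x*a^2 + y*a - 1 = 0 := by simpa using ha
  have a0 : a ≠ 0 := by rintro rfl; simp at ha'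
  have hk : a * a⁻¹ = 1 := mul_inv_cancel₀ a0
  have hdeg2 : (Polynomial.X^2 - Polynomial.C (x - a) * Polynomial.X + Polynomial.C a⁻¹ : L[X]).degree = 2 := by compute_degree!
  obtain ⟨b, hb⟩ := IsAlgClosed.exists_root (Polynomial.X^2 - Polynomial.C (x - a) * Polynomial.X + Polynomial.C a⁻¹ : L[X])
    (by rw [hdeg2]; decide)
  have hb' : b^2 - (x - a)*b + a⁻¹ = 0 := by simpa using hb
  refine ⟨a, b, x - a - b, by ring, ?_, ?_⟩
  · apply mul_left_cancel₀ a0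
    linear_combination (-1:L) * ha' + (-a) * hb' + hk
  · linear_combination (-a) * hb' + hk

/-- `g_n(e₁, e₂)` is the power sum `aⁿ + bⁿ + cⁿ` when `e₃ = abc = 1`. -/
lemma chebAux_powersum {L : Type*} [CommRing L] (x y a b c : L)
    (h1 : a + b + c = x) (h2 : a*b + a*c + b*c = y) (h3 : a*b*c = 1) :
    ∀ n : ℕ, chebAux (n+1) x y = a^n + b^n + c^n := by
  have hA : a^3 = x*a^2 - y*a + 1 := by linear_combination a^2*h1 - a*h2 + h3
  have hB : b^3 = x*b^2 - y*b + 1 := by linear_combination b^2*h1 - b*h2 + h3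
  have hC : c^3 = x*c^2 - y*c + 1 := by linear_combination c^2*h1 - c*h2 + h3
  intro n
  induction n using Nat.strong_induction_on with
  | _ n ih =>
    match n with
    | 0 => norm_num [chebAux]
    | 1 => simpa [chebAux] using h1.symm
    | 2 =>
      show x * chebAux 2 x y - y * chebAux 1 x y + chebAux 0 x y = _
      simp only [chebAux]
      linear_combination (-(x+a+b+c))*h1 + 2*h2
    | (m+3) =>
      have e2 := ih (m+2) (by omega)
      have e1' := ih (m+1) (by omega)
      have e0 := ih m (by omega)
      show x * chebAux (m+3) x y - y * chebAux (m+2) x y + chebAux (m+1) x y = _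
      rw [e2, e1', e0]
      linear_combination (-(a^m))*hA + (-(b^m))*hB + (-(c^m))*hC

/-- Evaluating `chebAuxP` agrees with the function `chebAux`. -/
lemma eval_chebAuxP {L : Type*} [CommRing L] (f : Fin 2 → L) :
    ∀ n : ℕ, eval f ((chebAuxP n).map (Int.castRingHom L)) = chebAux n (f 0) (f 1) := by
  intro n
  induction n using Nat.strong_induction_on with
  | _ n ih =>
    match n with
    | 0 => simp [chebAuxP, chebAux]
    | 1 => simp [chebAuxP, chebAux]
    | 2 => simp [chebAuxP, chebAux]
    | (m+3) =>
      have e2 := ih (m+2) (by omega)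
      have e1' := ih (m+1) (by omega)
      have e0 := ih m (by omega)
      show eval f ((MvPolynomial.X 0 * chebAuxP (m+2) - MvPolynomial.X 1 * chebAuxP (m+1)
        + chebAuxP m).map (Int.castRingHom L)) = _
      simp only [map_add, map_sub, map_mul, map_X, e2, e1', e0, MvPolynomial.eval_X]
      rfl

/-- The function-level Frobenius statement for `g`. -/
lemma g_fun_frobenius {L : Type*} [Field L] [IsAlgClosed L] (p : ℕ) [Fact p.Prime]
    [CharP L p] (r : ℕ) (x y : L) : g (p ^ r) x y = x ^ (p ^ r) := by
  obtain ⟨a, b, c, h1, h2, h3⟩ := exists_roots_aux x y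
  have := chebAux_powersum x y a b c h1 h2 h3 (p ^ r)
  rw [g, this, ← h1, add_pow_char_pow, add_pow_char_pow]

theorem g_frobenius (p : ℕ) [hp : Fact p.Prime] (r : ℕ) (hr : 0 < r) (q : ℕ) (hq : q = p ^ r) :
    (gP q).map (Int.castRingHom (ZMod p)) = MvPolynomial.X 0 ^ q ∧
    ∀ x y : AlgebraicClosure (ZMod p),
      (g q x y, g q y x) = (x ^ q, y ^ q) := by
  subst hq
  set L := AlgebraicClosure (ZMod p)
  have key : ∀ x y : L, g (p ^ r) x y = x ^ (p ^ r) := fun x y => g_fun_frobenius p r x y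
  constructor
  · apply MvPolynomial.map_injective (algebraMap (ZMod p) L) (algebraMap (ZMod p) L).injective
    rw [MvPolynomial.map_map]
    have hcomp : (algebraMap (ZMod p) L).comp (Int.castRingHom (ZMod p)) = Int.castRingHom L :=
      RingHom.ext_int _ _
    rw [hcomp, map_pow, map_X]
    apply MvPolynomial.funext
    intro f
    rw [show (gP (p ^ r)) = chebAuxP (p ^ r + 1) from rfl, eval_chebAuxP]
    have := key (f 0) (f 1)
    rw [g] at this
    simp [this]
  · intro x y
    simp [key x y, key y x]
end
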